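/- Let u : cl(Ω) × S¹ → ℝ be continuous such that for every θ ∈ (−π, π] the function z ↦ u(z, e^{iθ}) is continuously differentiable on Ω and satisfies the transport equation cos θ · ∂_{x₁} u(z, e^{iθ}) + sin θ · ∂_{x₂} u(z, e^{iθ}) = 0 for all z ∈ Ω, and u(e^{iβ}, e^{iθ}) = 0 whenever cos(θ − β) < 0 (i.e., u vanishes on the influx boundary Γ₋). Then u is identically zero on cl(Ω) × S¹. -/

import Mathlib

/-!
A solution of `d · ∇f = 0` is constant along the lines `t ↦ x + t d`. Following such a line
backwards from a point `x` of the open unit ball, it leaves the ball at a point `p` of the sphere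
where `⟪p, d⟫ < 0`, i.e. on the influx boundary, where `f p = 0`; by the mean value theorem and
continuity up to the boundary, `f x = f p = 0`. Density of the open ball in the closed one
finishes the argument.
-/

open MeasureTheory Filter Set

noncomputable section

/-- The point `e^{iβ}` on the unit circle `Γ`. -/
def circlePoint (β : ℝ) : ℂ := Complex.exp (Complex.I * β)

open Metric
open scoped InnerProductSpace

section InnerProductSpace

variable {E : Type*} [NormedAddCommGroup E] [InnerProductSpace ℝ E]

theorem norm_add_smul_sq_of_norm_eq_one {x d : E} (hd : ‖d‖ = 1) (t : ℝ) :
    ‖x + t • d‖ ^ 2 = ‖x‖ ^ 2 + 2 * t * ⟪x, d⟫_ℝ + t ^ 2 := by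
  rw [norm_add_sq_real, real_inner_smul_right, norm_smul, hd, Real.norm_eq_abs, mul_one, sq_abs]
  ring

theorem exists_neg_exit_unitBall {x d : E} (hx : ‖x‖ < 1) (hd : ‖d‖ = 1) :
    ∃ a : ℝ, a < 0 ∧ ‖x + a • d‖ = 1 ∧ ⟪x + a • d, d⟫_ℝ < 0 ∧ ∀ t ∈ Ioc a 0, ‖x + t • d‖ < 1 := by
  set s := ⟪x, d⟫_ℝ
  set D := √(s ^ 2 + 1 - ‖x‖ ^ 2)
  have hD : D ^ 2 = s ^ 2 + 1 - ‖x‖ ^ 2 := Real.sq_sqrt (by nlinarith [norm_nonneg x])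
  have hsD : |s| < D := (Real.lt_sqrt (abs_nonneg s)).mpr (by nlinarith [sq_abs s, norm_nonneg x])
  obtain ⟨hsD₁, hsD₂⟩ := abs_lt.mp hsD
  -- `‖x + t d‖² - 1 = (t - a)(t - b)` with exit times `a = -s - D < 0 < b = -s + D`
  have hfactor : ∀ t : ℝ, ‖x + t • d‖ ^ 2 - 1 = (t - (-s - D)) * (t - (-s + D)) := fun t => by
    rw [norm_add_smul_sq_of_norm_eq_one hd]
    linear_combination hD
  refine ⟨-s - D, by linarith, ?_, ?_, fun t ht => ?_⟩
  · have h := hfactor (-s - D)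
    rw [sub_self, zero_mul, sub_eq_zero] at h
    exact (pow_left_inj₀ (norm_nonneg _) zero_le_one two_ne_zero).mp (by rw [h, one_pow])
  · rw [inner_add_left, real_inner_smul_left, real_inner_self_eq_norm_sq, hd]
    linarith
  · refine (sq_lt_one_iff₀ (norm_nonneg _)).mp (sub_neg.mp ?_)
    rw [hfactor]
    exact mul_neg_of_pos_of_neg (by linarith [ht.1]) (by linarith [ht.2])

theorem eq_zero_of_fderiv_apply_eq_zero_of_eq_zero_on_influx {f : E → ℝ} {d : E} (hd : ‖d‖ = 1)
    (hcont : ContinuousOn f (closedBall 0 1)) (hdiff : DifferentiableOn ℝ f (ball 0 1))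
    (htransport : ∀ x ∈ ball (0 : E) 1, fderiv ℝ f x d = 0)
    (hinflux : ∀ p : E, ‖p‖ = 1 → ⟪p, d⟫_ℝ < 0 → f p = 0) :
    ∀ x ∈ closedBall (0 : E) 1, f x = 0 := by
  suffices hball : EqOn f 0 (ball 0 1) from
    hball.of_subset_closure hcont continuousOn_const ball_subset_closedBall
      (closure_ball 0 one_ne_zero).ge
  intro x hx
  obtain ⟨a, ha, hexit, hinward, hinside⟩ := exists_neg_exit_unitBall (mem_ball_zero_iff.mp hx) hd
  set g : ℝ → ℝ := fun t => f (x + t • d)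
  have hg_cont : ContinuousOn g (Icc a 0) := by
    refine hcont.comp (by fun_prop) fun t ht => mem_closedBall_zero_iff.mpr ?_
    rcases ht.1.eq_or_lt with rfl | hat
    · exact hexit.le
    · exact (hinside t ⟨hat, ht.2⟩).le
  have hg_deriv : ∀ t ∈ Ioo a 0, HasDerivAt g 0 t := by
    intro t ht
    have hmem : x + t • d ∈ ball (0 : E) 1 := mem_ball_zero_iff.mpr (hinside t ⟨ht.1, ht.2.le⟩)
    have hline : HasDerivAt (fun t : ℝ => x + t • d) d t := by
      simpa using ((hasDerivAt_id t).smul_const d).const_add x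
    have hf := (hdiff.differentiableAt (isOpen_ball.mem_nhds hmem)).hasFDerivAt
    have hg := hf.comp_hasDerivAt t hline
    rwa [htransport _ hmem] at hg
  obtain ⟨c, -, hc⟩ := exists_hasDerivAt_eq_slope g (fun _ => 0) ha hg_cont hg_deriv
  have hga : g a = g 0 := by
    rw [eq_comm, div_eq_zero_iff, sub_eq_zero] at hc
    exact hc.resolve_right (by linarith) |>.symm
  simpa [g, hinflux _ hexit hinward] using hga.symm

end InnerProductSpace

theorem circlePoint_eq_cos_smul_add_sin_smul (θ : ℝ) :
    circlePoint θ = Real.cos θ • (1 : ℂ) + Real.sin θ • Complex.I := by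
  rw [circlePoint, mul_comm, Complex.exp_mul_I, ← Complex.ofReal_cos, ← Complex.ofReal_sin]
  simp [Complex.real_smul]

theorem norm_circlePoint (θ : ℝ) : ‖circlePoint θ‖ = 1 := by
  rw [circlePoint, mul_comm, Complex.norm_exp_ofReal_mul_I]

theorem inner_circlePoint (β θ : ℝ) : ⟪circlePoint β, circlePoint θ⟫_ℝ = Real.cos (θ - β) := by
  simp [circlePoint_eq_cos_smul_add_sin_smul, Complex.inner, Real.cos_sub, Complex.cos_ofReal_re,
    Complex.sin_ofReal_re]

theorem circlePoint_arg {p : ℂ} (hp : ‖p‖ = 1) : circlePoint p.arg = p := by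
  simpa [circlePoint, hp, mul_comm] using Complex.norm_mul_exp_arg_mul_I p

theorem stmt15_general (u : ℂ → ℝ → ℝ)
    (hcont : ContinuousOn (fun q : ℂ × ℝ => u q.1 q.2)
      (Metric.closedBall (0 : ℂ) 1 ×ˢ (univ : Set ℝ)))
    (hdiff : ∀ θ : ℝ, ContDiffOn ℝ 1 (fun z : ℂ => u z θ) (Metric.ball (0 : ℂ) 1))
    (htransport : ∀ θ : ℝ, ∀ z : ℂ, z ∈ Metric.ball (0 : ℂ) 1 →
      Real.cos θ * (fderiv ℝ (fun w : ℂ => u w θ) z) 1 +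
        Real.sin θ * (fderiv ℝ (fun w : ℂ => u w θ) z) Complex.I = 0)
    (hbdry : ∀ β θ : ℝ, Real.cos (θ - β) < 0 → u (circlePoint β) θ = 0) :
    ∀ z : ℂ, z ∈ Metric.closedBall (0 : ℂ) 1 → ∀ θ : ℝ, u z θ = 0 := by
  intro z hz θ
  have hslice : ContinuousOn (fun w => u w θ) (closedBall 0 1) :=
    hcont.comp (continuous_id.prodMk continuous_const).continuousOn fun w hw => ⟨hw, mem_univ θ⟩
  refine eq_zero_of_fderiv_apply_eq_zero_of_eq_zero_on_influx (norm_circlePoint θ) hslice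
    ((hdiff θ).differentiableOn one_ne_zero) (fun w hw => ?_) (fun p hp hin => ?_) z hz
  · rw [circlePoint_eq_cos_smul_add_sin_smul, map_add, map_smul, map_smul]
    exact htransport θ w hw
  · rw [← circlePoint_arg hp, inner_circlePoint] at hin
    rw [← circlePoint_arg hp]
    exact hbdry _ θ hin

/-- Uniqueness for the homogeneous transport boundary value problem: a continuous
solution `u` of `θ·∇u = 0` in `Ω` vanishing on the influx boundary `Γ₋` vanishes
identically on `cl(Ω) × S¹`. -/
theorem stmt15 (u : ℂ → ℝ → ℝ)
    (hper : ∀ z : ℂ, ∀ θ : ℝ, u z (θ + 2 * Real.pi) = u z θ)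
    (hcont : ContinuousOn (fun q : ℂ × ℝ => u q.1 q.2)
      (Metric.closedBall (0 : ℂ) 1 ×ˢ (univ : Set ℝ)))
    (hdiff : ∀ θ : ℝ, ContDiffOn ℝ 1 (fun z : ℂ => u z θ) (Metric.ball (0 : ℂ) 1))
    (htransport : ∀ θ : ℝ, ∀ z : ℂ, z ∈ Metric.ball (0 : ℂ) 1 →
      Real.cos θ * (fderiv ℝ (fun w : ℂ => u w θ) z) 1 +
        Real.sin θ * (fderiv ℝ (fun w : ℂ => u w θ) z) Complex.I = 0)
    (hbdry : ∀ β θ : ℝ, Real.cos (θ - β) < 0 → u (circlePoint β) θ = 0) :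
    ∀ z : ℂ, z ∈ Metric.closedBall (0 : ℂ) 1 → ∀ θ : ℝ, u z θ = 0 :=
  stmt15_general u hcont hdiff htransport hbdry
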